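/- arXiv:2512.00687 — 2 statements merged into one kernel-verified Lean document; each statement's English description precedes it below -/
import Mathlib

section
/- Let K be a field, ι a finite index set, and L : ι → Lie algebras over K, each simple (non-abelian with no ideals other than 0 and the whole algebra). Let h be a Lie subalgebra of the product Π_{i∈ι} L_i such that for every i the coordinate projection h → L_i is surjective, and for every pair i ≠ j the projection h → L_i × L_j is surjective. Then h = Π_{i∈ι} L_i. -/
/-!
Fix `i` and, for a set `S` of indices not containing `i`, let `V_S ⊆ L i` be the `i`-th
coordinates of the elements of `h` vanishing on `S`. Surjectivity onto `L i` gives `V_∅ = L i`.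
If `x ∈ h` has coordinates `(b, 0)` at `(i, j)` and `y ∈ h` realises `a ∈ V_S`, then `⁅x, y⁆`
realises `⁅b, a⁆ ∈ V_{S ∪ {j}}`; since a simple Lie algebra is spanned by its brackets,
`V_S = L i` forces `V_{S ∪ {j}} = L i`. For `S = {i}ᶜ` this puts every `Pi.single i a` in `h`.
-/

section PiLie

variable {K : Type*} [CommRing K]
variable {ι : Type*} {L : ι → Type*} [∀ i, LieRing (L i)]

instance Pi.instLieRing : LieRing (∀ i, L i) where
  bracket x y := fun i => ⁅x i, y i⁆
  add_lie x y z := funext fun i => add_lie (x i) (y i) (z i)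
  lie_add x y z := funext fun i => lie_add (x i) (y i) (z i)
  lie_self x := funext fun i => lie_self (x i)
  leibniz_lie x y z := funext fun i => leibniz_lie (x i) (y i) (z i)

instance Pi.instLieAlgebra [∀ i, LieAlgebra K (L i)] : LieAlgebra K (∀ i, L i) where
  lie_smul t x y := funext fun i => lie_smul t (x i) (y i)

end PiLie

lemma LieAlgebra.IsSimple.lie_top_top_eq_top (K L : Type*) [CommRing K] [LieRing L]
    [LieAlgebra K L] [LieAlgebra.IsSimple K L] : ⁅(⊤ : LieIdeal K L), (⊤ : LieIdeal K L)⁆ = ⊤ := by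
  refine lie_eq_self_of_isAtom_of_nonabelian ⊤ (LieAlgebra.IsSimple.isAtom_top K L) ?_
  rw [lie_abelian_iff_equiv_lie_abelian (LieIdeal.topEquiv (R := K) (L := L))]
  exact LieAlgebra.IsSimple.non_abelian K

lemma Submodule.eq_top_of_forall_lie_mem {K L : Type*} [CommRing K] [LieRing L] [LieAlgebra K L]
    (hL : ⁅(⊤ : LieIdeal K L), (⊤ : LieIdeal K L)⁆ = ⊤) (N : Submodule K L)
    (hN : ∀ x y : L, ⁅x, y⁆ ∈ N) : N = ⊤ := by
  rw [eq_top_iff, ← LieSubmodule.top_toSubmodule (R := K) (L := L), ← hL,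
    LieSubmodule.lieIdeal_oper_eq_linear_span, Submodule.span_le]
  rintro _ ⟨x, y, rfl⟩
  exact hN x y

namespace LieSubalgebra

variable {K ι : Type*} {L : ι → Type*} [CommRing K] [∀ i, LieRing (L i)] [∀ i, LieAlgebra K (L i)]
  (h : LieSubalgebra K (∀ i, L i))

def vanishingCoords (S : Set ι) (i : ι) : Submodule K (L i) :=
  (h.toSubmodule ⊓ ⨅ j ∈ S, LinearMap.ker (LinearMap.proj j)).map (LinearMap.proj i)

variable {h} in
lemma mem_vanishingCoords {S : Set ι} {i : ι} {a : L i} :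
    a ∈ h.vanishingCoords S i ↔ ∃ y ∈ h, (∀ j ∈ S, y j = 0) ∧ y i = a := by
  simp [vanishingCoords, and_assoc]

lemma vanishingCoords_empty {i : ι} (hproj : Function.Surjective fun x : h => (x : ∀ i, L i) i) :
    h.vanishingCoords ∅ i = ⊤ := by
  refine eq_top_iff.2 fun a _ => mem_vanishingCoords.2 ?_
  obtain ⟨y, rfl⟩ := hproj a
  exact ⟨y, y.2, by simp, rfl⟩

lemma lie_mem_vanishingCoords_insert {S : Set ι} {i j : ι}
    (hpair : Function.Surjective fun x : h => (((x : ∀ i, L i) i, (x : ∀ i, L i) j) : L i × L j))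
    (b : L i) {a : L i} (ha : a ∈ h.vanishingCoords S i) :
    ⁅b, a⁆ ∈ h.vanishingCoords (insert j S) i := by
  obtain ⟨y, hy, hyS, rfl⟩ := mem_vanishingCoords.1 ha
  obtain ⟨x, hx⟩ := hpair (b, 0)
  simp only [Prod.ext_iff] at hx
  refine mem_vanishingCoords.2 ⟨⁅(x : ∀ i, L i), y⁆, h.lie_mem x.2 hy, ?_, ?_⟩
  · rintro k (rfl | hk)
    · exact (congrArg (⁅·, y k⁆) hx.2).trans (zero_lie _)
    · exact (congrArg (⁅x.1 k, ·⁆) (hyS k hk)).trans (lie_zero _)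
  · exact congrArg (⁅·, y i⁆) hx.1

lemma vanishingCoords_eq_top (hL : ∀ i, ⁅(⊤ : LieIdeal K (L i)), (⊤ : LieIdeal K (L i))⁆ = ⊤)
    (hproj : ∀ i, Function.Surjective fun x : h => (x : ∀ i, L i) i)
    (hpair : ∀ i j, i ≠ j →
      Function.Surjective fun x : h => (((x : ∀ i, L i) i, (x : ∀ i, L i) j) : L i × L j))
    {S : Set ι} (hS : S.Finite) {i : ι} (hi : i ∉ S) :
    h.vanishingCoords S i = ⊤ := by
  induction S, hS using Set.Finite.induction_on with
  | empty => exact h.vanishingCoords_empty (hproj i)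
  | @insert j S _ _ ih =>
    rw [Set.mem_insert_iff, not_or] at hi
    refine Submodule.eq_top_of_forall_lie_mem (hL i) _ fun b a => ?_
    exact h.lie_mem_vanishingCoords_insert (hpair i j hi.1) b (ih hi.2 ▸ Submodule.mem_top)

lemma single_mem_iff [DecidableEq ι] {i : ι} {a : L i} :
    Pi.single i a ∈ h ↔ a ∈ h.vanishingCoords {i}ᶜ i := by
  refine ⟨fun ha => mem_vanishingCoords.2 ⟨_, ha, fun j hj => Pi.single_eq_of_ne hj a, by simp⟩,
    fun ha => ?_⟩
  obtain ⟨y, hy, hyS, rfl⟩ := mem_vanishingCoords.1 ha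
  convert hy
  ext j
  by_cases hj : j = i
  · subst hj; simp
  · simp [Pi.single_eq_of_ne hj, hyS j hj]

end LieSubalgebra

/-- A Lie subalgebra of a finite product of simple Lie algebras which surjects onto every
factor and onto every pair of distinct factors is the whole product. -/
theorem stmt_2 (K : Type*) [Field K] (ι : Type*) [Finite ι]
    (L : ι → Type*) [∀ i, LieRing (L i)] [∀ i, LieAlgebra K (L i)]
    [∀ i, LieAlgebra.IsSimple K (L i)]
    (h : LieSubalgebra K (∀ i, L i))
    (hproj : ∀ i : ι, Function.Surjective fun x : h => (x : ∀ i, L i) i)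
    (hpair : ∀ i j : ι, i ≠ j →
      Function.Surjective fun x : h => (((x : ∀ i, L i) i, (x : ∀ i, L i) j) : L i × L j)) :
    h = ⊤ := by
  classical
  cases nonempty_fintype ι
  have hL (i : ι) := LieAlgebra.IsSimple.lie_top_top_eq_top K (L i)
  have hsingle (i : ι) (a : L i) : Pi.single i a ∈ h := by
    rw [h.single_mem_iff, h.vanishingCoords_eq_top hL hproj hpair (Set.toFinite _)
      (Set.notMem_compl_iff.2 (Set.mem_singleton i))]
    exact Submodule.mem_top
  refine eq_top_iff.2 fun x _ => ?_
  rw [← Finset.univ_sum_single x]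
  exact sum_mem fun i _ => hsingle i (x i)
end

section
/- Let K be a field, ι a finite index set, and L : ι → Lie algebras over K, each simple (non-abelian with no ideals other than 0 and the whole algebra). Let h be a Lie subalgebra of the product Π_{i∈ι} L_i such that for every i the coordinate projection h → L_i is surjective. If h is not equal to the full product Π_{i∈ι} L_i, then there exist indices i ≠ j and an isomorphism of Lie algebras e : L_i ≃ L_j such that every element x ∈ h satisfies x_j = e (x_i). -/
/-!
Choose a set `s` of coordinates, minimal such that `h` does not project onto `∏_{i ∈ s} L i`,
and `i₀ ∈ s`. The projection of `h` to `s \ {i₀}` is onto, and the image under `x ↦ x i₀` of its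
kernel is an ideal of `L i₀`. It is not everything (by minimality of `s`), hence zero, so
`x i₀ = ψ (x|_{s \ {i₀}})` for a surjective Lie homomorphism `ψ : ∏_{i ∈ s \ {i₀}} L i → L i₀`.
The restriction of `ψ` to each factor `L k` is either zero or an isomorphism (its kernel and
image are ideals), and two such restrictions commute, so as `L i₀` has trivial center exactly one
of them survives.
-/

open Function LieAlgebra

namespace Pi

variable {ι : Type*} {L : ι → Type*} [∀ i, LieRing (L i)]

@[simp]
lemma lie_apply (x y : ∀ i, L i) (i : ι) : ⁅x, y⁆ i = ⁅x i, y i⁆ := rfl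

variable [DecidableEq ι]

lemma lie_single (x : ∀ i, L i) (i : ι) (c : L i) :
    ⁅x, Pi.single i c⁆ = Pi.single i ⁅x i, c⁆ := by
  ext j
  rcases eq_or_ne j i with rfl | hj
  · simp
  · simp [Pi.single_eq_of_ne hj]

lemma single_lie_single_of_ne {i j : ι} (hij : i ≠ j) (a : L i) (b : L j) :
    ⁅(Pi.single i a : ∀ k, L k), Pi.single j b⁆ = 0 := by
  rw [lie_single, Pi.single_eq_of_ne hij.symm, zero_lie, Pi.single_zero]

end Pi

namespace LieHom

variable {K : Type*} [CommRing K]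

section Pi

variable (K) {ι : Type*} (L : ι → Type*) [∀ i, LieRing (L i)] [∀ i, LieAlgebra K (L i)]

def piSingle [DecidableEq ι] (i : ι) : L i →ₗ⁅K⁆ ∀ i, L i :=
  { LinearMap.single K L i with
    map_lie' := by simp [Pi.lie_single] }

@[simp]
lemma piSingle_apply [DecidableEq ι] (i : ι) (c : L i) : piSingle K L i c = Pi.single i c := rfl

def piEval (i : ι) : (∀ i, L i) →ₗ⁅K⁆ L i :=
  { LinearMap.proj i with map_lie' := rfl }

def piRestrict (s : Set ι) : (∀ i, L i) →ₗ⁅K⁆ ∀ i : s, L i where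
  toFun := s.domRestrict
  map_add' _ _ := rfl
  map_smul' _ _ := rfl
  map_lie' := rfl

end Pi

variable {L L₁ L₂ : Type*} [LieRing L] [LieAlgebra K L] [LieRing L₁] [LieAlgebra K L₁]
  [LieRing L₂] [LieAlgebra K L₂]

lemma apply_eq_apply_of_ker_le {f : L →ₗ⁅K⁆ L₁} {g : L →ₗ⁅K⁆ L₂} (hfg : f.ker ≤ g.ker) {x y : L}
    (hxy : f x = f y) : g x = g y := by
  rw [← sub_eq_zero, ← map_sub]
  exact mem_ker.mp (hfg (mem_ker.mpr (by rw [map_sub, hxy, sub_self])))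

noncomputable def liftOfSurjective (f : L →ₗ⁅K⁆ L₁) (hf : Surjective f) (g : L →ₗ⁅K⁆ L₂)
    (hfg : f.ker ≤ g.ker) : L₁ →ₗ⁅K⁆ L₂ where
  toFun a := g (surjInv hf a)
  map_add' a b := by
    rw [← map_add]
    exact apply_eq_apply_of_ker_le hfg (by simp [surjInv_eq hf])
  map_smul' t a := by
    rw [← map_smul]
    exact apply_eq_apply_of_ker_le hfg (by simp [surjInv_eq hf])
  map_lie' {a b} := by
    rw [← map_lie]
    exact apply_eq_apply_of_ker_le hfg (by simp [surjInv_eq hf])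

@[simp]
lemma liftOfSurjective_apply (f : L →ₗ⁅K⁆ L₁) (hf : Surjective f) (g : L →ₗ⁅K⁆ L₂)
    (hfg : f.ker ≤ g.ker) (x : L) : liftOfSurjective f hf g hfg (f x) = g x :=
  apply_eq_apply_of_ker_le hfg (surjInv_eq hf _)

lemma surjective_liftOfSurjective {f : L →ₗ⁅K⁆ L₁} (hf : Surjective f) {g : L →ₗ⁅K⁆ L₂}
    (hg : Surjective g) (hfg : f.ker ≤ g.ker) : Surjective (liftOfSurjective f hf g hfg) :=
  fun b => (hg b).elim fun x hx => ⟨f x, by rw [liftOfSurjective_apply, hx]⟩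

/-- Goursat's dichotomy for a simple second factor. -/
lemma ker_le_ker_or_surjective_prod [IsSimple K L₂] {f : L →ₗ⁅K⁆ L₁} {g : L →ₗ⁅K⁆ L₂}
    (hf : Surjective f) (hg : Surjective g) : f.ker ≤ g.ker ∨ Surjective (f.prod g) := by
  rcases IsSimple.eq_bot_or_eq_top (f.ker.map g) with h | h
  · exact Or.inl (LieIdeal.map_eq_bot_iff.mp h)
  · refine Or.inr fun ⟨a, b⟩ => ?_
    obtain ⟨x, rfl⟩ := hf a
    obtain ⟨⟨z, hz⟩, hzb⟩ :=
      LieIdeal.mem_map_of_surjective hg (h ▸ LieSubmodule.mem_top (b - g x))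
    refine ⟨x + z, ?_⟩
    simp [mem_ker.mp hz, hzb]

lemma eq_zero_or_bijective_of_isIdealMorphism [IsSimple K L₁] [IsSimple K L₂]
    {f : L₁ →ₗ⁅K⁆ L₂} (hf : f.IsIdealMorphism) : f = 0 ∨ Bijective f := by
  refine or_iff_not_imp_left.mpr fun hf0 => ⟨?_, ?_⟩
  · refine (ker_eq_bot f).mp ((IsSimple.eq_bot_or_eq_top f.ker).resolve_right fun htop => hf0 ?_)
    ext x
    exact mem_ker.mp (htop ▸ LieSubmodule.mem_top x)
  · intro b
    refine (mem_idealRange_iff f hf).mp ?_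
    rw [(IsSimple.eq_bot_or_eq_top f.idealRange).resolve_left fun hbot => hf0 ?_]
    · exact LieSubmodule.mem_top b
    ext x
    simpa [hbot] using f.mem_idealRange x

end LieHom

lemma LieAlgebra.IsSimple.eq_zero_of_forall_lie_eq_zero {K L : Type*} [CommRing K] [LieRing L]
    [LieAlgebra K L] [IsSimple K L] {a : L} (ha : ∀ b : L, ⁅b, a⁆ = 0) : a = 0 := by
  have : a ∈ center K L := (LieModule.mem_maxTrivSubmodule K L L a).mpr ha
  rwa [center_eq_bot, LieSubmodule.mem_bot] at this

namespace LieHom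

variable {K : Type*} [CommRing K] {ι : Type*} {L : ι → Type*} [∀ i, LieRing (L i)]
  [∀ i, LieAlgebra K (L i)] {B : Type*} [LieRing B] [LieAlgebra K B]

lemma isIdealMorphism_comp_piSingle [DecidableEq ι] {ψ : (∀ i, L i) →ₗ⁅K⁆ B}
    (hψ : Surjective ψ) (j : ι) : (ψ.comp (piSingle K L j)).IsIdealMorphism := by
  rw [isIdealMorphism_iff]
  intro b c
  obtain ⟨x, rfl⟩ := hψ b
  exact ⟨⁅x j, c⁆, by rw [comp_apply, comp_apply, ← map_lie, piSingle_apply, piSingle_apply,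
    Pi.lie_single]⟩

lemma apply_eq_sum_apply_single [Fintype ι] [DecidableEq ι] (ψ : (∀ i, L i) →ₗ⁅K⁆ B)
    (x : ∀ i, L i) : ψ x = ∑ j, ψ (Pi.single j (x j)) := by
  rw [← map_sum, LinearMap.sum_single_apply]

theorem exists_lieEquiv_apply_eq_of_surjective [Finite ι] [∀ i, IsSimple K (L i)] [IsSimple K B]
    {ψ : (∀ i, L i) →ₗ⁅K⁆ B} (hψ : Surjective ψ) :
    ∃ k, ∃ e : L k ≃ₗ⁅K⁆ B, ∀ x, ψ x = e (x k) := by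
  classical
  have := Fintype.ofFinite ι
  have := LieModule.nontrivial_of_isIrreducible K B B
  obtain ⟨k, hk⟩ : ∃ k, Bijective (ψ.comp (piSingle K L k)) := by
    by_contra! hnone
    have hzero (j : ι) (a : L j) : ψ (Pi.single j a) = 0 :=
      DFunLike.congr_fun ((eq_zero_or_bijective_of_isIdealMorphism
        (isIdealMorphism_comp_piSingle hψ j)).resolve_right (hnone j)) a
    obtain ⟨b, hb⟩ := exists_ne (0 : B)
    obtain ⟨x, rfl⟩ := hψ b
    exact hb (by rw [apply_eq_sum_apply_single, Finset.sum_eq_zero fun j _ => hzero j (x j)])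
  -- the image of `L j` commutes with that of `L k`, which is everything
  have hvanish (j : ι) (hjk : j ≠ k) (a : L j) : ψ (Pi.single j a) = 0 :=
    IsSimple.eq_zero_of_forall_lie_eq_zero (K := K) fun b => by
      obtain ⟨c, rfl⟩ := hk.2 b
      rw [comp_apply, piSingle_apply, ← map_lie, Pi.single_lie_single_of_ne hjk.symm, map_zero]
  refine ⟨k, LieEquiv.ofBijective _ hk, fun x => ?_⟩
  rw [apply_eq_sum_apply_single ψ x,
    Finset.sum_eq_single k (fun j _ hjk => hvanish j hjk (x j)) (by simp)]
  rfl

end LieHom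

section Restrict

variable {ι M : Type*} {L : ι → Type*}

lemma exists_minimal_not_surjective_domRestrict [Finite ι] [Nonempty M] {f : M → ∀ i, L i}
    (hf : ¬Surjective f) : ∃ s : Set ι, ∃ i₀ ∈ s, ¬Surjective (fun m => s.domRestrict (f m)) ∧
      Surjective fun m => (s \ {i₀}).domRestrict (f m) := by
  obtain ⟨s, hs⟩ := exists_minimal_of_wellFoundedLT
    (fun s : Set ι => ¬Surjective fun m => s.domRestrict (f m))
    ⟨Set.univ, fun h => hf fun y =>
      (h (Set.univ.domRestrict y)).imp fun m hm => funext fun i => congrFun hm ⟨i, trivial⟩⟩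
  obtain ⟨i₀, hi₀⟩ : s.Nonempty := Set.nonempty_iff_ne_empty.mpr <| by
    rintro rfl
    exact hs.prop fun y => ⟨Classical.arbitrary M, funext fun i => i.2.elim⟩
  exact ⟨s, i₀, hi₀, hs.prop, not_not.mp (hs.not_prop_of_lt (Set.sdiff_singleton_ssubset.mpr hi₀))⟩

lemma surjective_domRestrict_of_surjective_diff_singleton {f : M → ∀ i, L i} {s : Set ι} {i₀ : ι}
    (hi₀ : i₀ ∈ s) (hf : Surjective fun m => ((s \ {i₀}).domRestrict (f m), f m i₀)) :
    Surjective fun m => s.domRestrict (f m) := by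
  intro y
  obtain ⟨m, hm⟩ := hf (fun i => y ⟨i, i.2.1⟩, y ⟨i₀, hi₀⟩)
  obtain ⟨hm₁, hm₂⟩ := Prod.ext_iff.mp hm
  refine ⟨m, funext fun ⟨i, hi⟩ => ?_⟩
  by_cases hii₀ : i = i₀
  · subst hii₀
    exact hm₂
  · exact congrFun hm₁ ⟨i, hi, hii₀⟩

end Restrict

/-- If a Lie subalgebra of a finite product of simple Lie algebras surjects onto every
factor but is not the whole product, then two distinct coordinates are identified by an
isomorphism of the corresponding simple factors. -/
theorem stmt_3 (K : Type*) [Field K] (ι : Type*) [Finite ι]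
    (L : ι → Type*) [∀ i, LieRing (L i)] [∀ i, LieAlgebra K (L i)]
    [∀ i, LieAlgebra.IsSimple K (L i)]
    (h : LieSubalgebra K (∀ i, L i))
    (hproj : ∀ i : ι, Function.Surjective fun x : h => (x : ∀ i, L i) i)
    (hne : h ≠ ⊤) :
    ∃ i j : ι, i ≠ j ∧ ∃ e : L i ≃ₗ⁅K⁆ L j, ∀ x ∈ h, x j = e (x i) := by
  obtain ⟨s, i₀, hi₀, hs, hs'⟩ := exists_minimal_not_surjective_domRestrict
    (f := fun x : h => (x : ∀ i, L i)) fun hsurj => hne <| eq_top_iff.mpr fun x _ => by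
      obtain ⟨y, rfl⟩ := hsurj x
      exact y.2
  set ρ := (LieHom.piRestrict K L (s \ {i₀})).comp h.incl
  set π := (LieHom.piEval K L i₀).comp h.incl
  have hker : ρ.ker ≤ π.ker :=
    (LieHom.ker_le_ker_or_surjective_prod hs' (hproj i₀)).resolve_right
      fun hprod => hs (surjective_domRestrict_of_surjective_diff_singleton hi₀ hprod)
  obtain ⟨⟨k, hk⟩, e, he⟩ := LieHom.exists_lieEquiv_apply_eq_of_surjective
    (LieHom.surjective_liftOfSurjective hs' (hproj i₀) hker)
  refine ⟨k, i₀, hk.2, e, fun x hx => ?_⟩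
  calc x i₀ = π ⟨x, hx⟩ := rfl
    _ = ρ.liftOfSurjective hs' π hker (ρ ⟨x, hx⟩) := (LieHom.liftOfSurjective_apply ..).symm
    _ = e (x k) := he _
end
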